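/- On the Hilbert space H ⊕ H, consider the block operators M_BdG := [[D+V, V],[−V, −(D+V)]], S := [[A, 0],[0, B]], and T := (1/√2)[[1, i·1],[1, −i·1]] (2×2 blocks of bounded operators on H, with 1 the identity of H). Then G := T S^{-1} T* is bounded with bounded inverse, and G · M_BdG · G^{-1} = [[E, 0],[0, −E]]. In particular, the spectrum of M_BdG equals σ(E) ∪ (−σ(E)). (This makes precise the Bogoliubov–de Gennes eigenvalue problem: the positive frequencies ω solving (D+V)u + Vy = ωu, −Vu − (D+V)y = ωy are exactly the points of σ(E).) -/

import Mathlib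

/- Context: `H` a complex Hilbert space, `D` bounded self-adjoint with `D ≥ δ·1`, `δ > 0`,
`V` a positive trace-class operator, `E := (D^{1/2}(D+2V)D^{1/2})^{1/2}`,
`A := D^{1/2}E^{-1/2}`, `B := D^{-1/2}E^{1/2}`.
Statement 16: on `H ⊕ H`, with `M_BdG := [[D+V, V],[−V, −(D+V)]]`, `S := [[A,0],[0,B]]`,
`T := (1/√2)[[1, i],[1, −i]]`, the operator `G := T S⁻¹ T*` is bounded with bounded inverse,
`G M_BdG G⁻¹ = [[E,0],[0,−E]]`, and `σ(M_BdG) = σ(E) ∪ (−σ(E))`. -/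

open scoped InnerProductSpace ENNReal

set_option synthInstance.maxHeartbeats 1000000
set_option maxHeartbeats 1000000

universe u

variable {H : Type u} [NormedAddCommGroup H] [InnerProductSpace ℂ H] [CompleteSpace H]

/-- `|T| := (T*T)^{1/2}` via the continuous functional calculus. -/
noncomputable def opAbs (T : H →L[ℂ] H) : H →L[ℂ] H :=
  CFC.sqrt (ContinuousLinearMap.adjoint T * T)

/-- `T` is Hilbert–Schmidt if `∑_i ‖T e_i‖² < ∞` for some orthonormal (Hilbert) basis. -/
def IsHilbertSchmidt (T : H →L[ℂ] H) : Prop :=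
  ∃ (ι : Type u) (b : HilbertBasis ι ℂ H), Summable fun i => ‖T (b i)‖ ^ 2

/-- `T` is trace class if `∑_i ⟨e_i, (T*T)^{1/2} e_i⟩ < ∞` for some orthonormal basis. -/
def IsTraceClass (T : H →L[ℂ] H) : Prop :=
  ∃ (ι : Type u) (b : HilbertBasis ι ℂ H),
    Summable fun i => (⟪b i, opAbs T (b i)⟫_ℂ).re

/-- The squared Hilbert–Schmidt norm `∑_i ‖T e_i‖²`, valued in `ℝ≥0∞`
(basis independent). -/
noncomputable def eHSsq {ι : Type u} (b : HilbertBasis ι ℂ H) (T : H →L[ℂ] H) : ℝ≥0∞ :=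
  ∑' i, (‖T (b i)‖₊ : ℝ≥0∞) ^ 2

/-- The trace norm `‖T‖₁ = ∑_i ⟨e_i, |T| e_i⟩ = ∑_i ‖ |T|^{1/2} e_i ‖²`, valued in `ℝ≥0∞`
(basis independent). -/
noncomputable def eTraceNorm {ι : Type u} (b : HilbertBasis ι ℂ H) (T : H →L[ℂ] H) : ℝ≥0∞ :=
  ∑' i, (‖CFC.sqrt (opAbs T) (b i)‖₊ : ℝ≥0∞) ^ 2

/-- `E := (D^{1/2}(D+2V)D^{1/2})^{1/2}`. -/
noncomputable def bogE (D V : H →L[ℂ] H) : H →L[ℂ] H :=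
  CFC.sqrt (CFC.sqrt D * (D + (2 : ℝ) • V) * CFC.sqrt D)

/-- `A := D^{1/2} E^{-1/2}`. -/
noncomputable def bogA (D V : H →L[ℂ] H) : H →L[ℂ] H :=
  CFC.sqrt D * Ring.inverse (CFC.sqrt (bogE D V))

/-- `B := D^{-1/2} E^{1/2}`. -/
noncomputable def bogB (D V : H →L[ℂ] H) : H →L[ℂ] H :=
  Ring.inverse (CFC.sqrt D) * CFC.sqrt (bogE D V)

/-- The 2×2 block operator `[[P, Q],[R, S]]` on `H ⊕ H` (the `L²` direct sum `WithLp 2 (H × H)`). -/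
noncomputable def blk (P Q R S : H →L[ℂ] H) :
    WithLp 2 (H × H) →L[ℂ] WithLp 2 (H × H) :=
  ((WithLp.prodContinuousLinearEquiv 2 ℂ H H).symm.toContinuousLinearMap) ∘L
    (((P ∘L ContinuousLinearMap.fst ℂ H H) + (Q ∘L ContinuousLinearMap.snd ℂ H H)).prod
      ((R ∘L ContinuousLinearMap.fst ℂ H H) + (S ∘L ContinuousLinearMap.snd ℂ H H))) ∘L
    (WithLp.prodContinuousLinearEquiv 2 ℂ H H).toContinuousLinearMap

/-- The Bogoliubov–de Gennes block operator `[[D+V, V],[−V, −(D+V)]]`. -/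
noncomputable def MBdG (D V : H →L[ℂ] H) : WithLp 2 (H × H) →L[ℂ] WithLp 2 (H × H) :=
  blk (D + V) V (-V) (-(D + V))

/-- `S := [[A, 0],[0, B]]`. -/
noncomputable def Sblk (D V : H →L[ℂ] H) : WithLp 2 (H × H) →L[ℂ] WithLp 2 (H × H) :=
  blk (bogA D V) 0 0 (bogB D V)

/-- `T := (1/√2)[[1, i·1],[1, −i·1]]`. -/
noncomputable def Tblk : WithLp 2 (H × H) →L[ℂ] WithLp 2 (H × H) :=
  ((Real.sqrt 2 : ℂ))⁻¹ • blk 1 (Complex.I • 1) 1 (-(Complex.I • 1))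

/-- `G := T S⁻¹ T*`. -/
noncomputable def Gop (D V : H →L[ℂ] H) : WithLp 2 (H × H) →L[ℂ] WithLp 2 (H × H) :=
  Tblk * Ring.inverse (Sblk D V) * ContinuousLinearMap.adjoint Tblk


/- Conjugating by the unitary `T` turns `M_BdG` into the off-diagonal operator
`[[0, i D], [-i (D + 2V), 0]]`, and conjugating that by `S = diag(A, B)` gives
`[[0, i A⁻¹ D B], [-i B⁻¹ (D + 2V) A, 0]]`. With `d = D^{1/2}` and `s = E^{1/2}` we have
`A = d s⁻¹`, `B = d⁻¹ s`, hence `A⁻¹ D B = s d⁻¹ d² d⁻¹ s = E` and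
`B⁻¹ (D + 2V) A = s⁻¹ (d (D + 2V) d) s⁻¹ = s⁻¹ E² s⁻¹ = E`. Conjugating back by `T` turns
`[[0, i E], [-i E, 0]]` into `diag(E, -E)`, whose spectrum is `σ(E) ∪ σ(-E)`. -/

open ContinuousLinearMap Complex
open scoped Ring

section BlockOperators

variable {K : Type*} [NormedAddCommGroup K] [InnerProductSpace ℂ K]

@[simp] lemma blk_apply_fst (P Q R S : K →L[ℂ] K) (x : WithLp 2 (K × K)) :
    (blk P Q R S x).fst = P x.fst + Q x.snd := rfl

@[simp] lemma blk_apply_snd (P Q R S : K →L[ℂ] K) (x : WithLp 2 (K × K)) :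
    (blk P Q R S x).snd = R x.fst + S x.snd := rfl

lemma ext_withLp_prod {X Y : WithLp 2 (K × K) →L[ℂ] WithLp 2 (K × K)}
    (hfst : ∀ x, (X x).fst = (Y x).fst) (hsnd : ∀ x, (X x).snd = (Y x).snd) : X = Y :=
  ContinuousLinearMap.ext fun x => WithLp.ofLp_injective 2 (Prod.ext (hfst x) (hsnd x))

lemma blk_eq_blk_iff {P Q R S P' Q' R' S' : K →L[ℂ] K} :
    blk P Q R S = blk P' Q' R' S' ↔ P = P' ∧ Q = Q' ∧ R = R' ∧ S = S' := by
  refine ⟨fun h => ?_, by rintro ⟨rfl, rfl, rfl, rfl⟩; rfl⟩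
  have hl (x : K) := congrArg (fun X => X (WithLp.toLp 2 (x, 0))) h
  have hr (x : K) := congrArg (fun X => X (WithLp.toLp 2 (0, x))) h
  refine ⟨ext fun x => ?_, ext fun x => ?_, ext fun x => ?_, ext fun x => ?_⟩
  · simpa using congrArg WithLp.fst (hl x)
  · simpa using congrArg WithLp.fst (hr x)
  · simpa using congrArg WithLp.snd (hl x)
  · simpa using congrArg WithLp.snd (hr x)

lemma exists_eq_blk (X : WithLp 2 (K × K) →L[ℂ] WithLp 2 (K × K)) :
    ∃ P Q R S : K →L[ℂ] K, X = blk P Q R S := by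
  let e := WithLp.prodContinuousLinearEquiv 2 ℂ K K
  let Y : K × K →L[ℂ] K × K := (e : WithLp 2 (K × K) →L[ℂ] K × K) ∘L X ∘L (e.symm : _)
  refine ⟨fst ℂ K K ∘L Y ∘L inl ℂ K K, fst ℂ K K ∘L Y ∘L inr ℂ K K,
    snd ℂ K K ∘L Y ∘L inl ℂ K K, snd ℂ K K ∘L Y ∘L inr ℂ K K, ?_⟩
  have hX (x : WithLp 2 (K × K)) :
      X x = X (WithLp.toLp 2 (x.fst, 0)) + X (WithLp.toLp 2 (0, x.snd)) := by
    rw [← map_add]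
    exact congrArg X (WithLp.ofLp_injective 2 (Prod.ext (by simp) (by simp)))
  refine ext_withLp_prod (fun x => ?_) (fun x => ?_)
  · simpa [Y, e] using congrArg WithLp.fst (hX x)
  · simpa [Y, e] using congrArg WithLp.snd (hX x)

lemma blk_mul (P Q R S P' Q' R' S' : K →L[ℂ] K) :
    blk P Q R S * blk P' Q' R' S' =
      blk (P * P' + Q * R') (P * Q' + Q * S') (R * P' + S * R') (R * Q' + S * S') :=
  ext_withLp_prod (fun x => by simp; abel) (fun x => by simp; abel)

lemma blk_one : blk (1 : K →L[ℂ] K) 0 0 1 = 1 :=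
  ext_withLp_prod (fun x => by simp) (fun x => by simp)

lemma blk_smul (c : ℂ) (P Q R S : K →L[ℂ] K) :
    c • blk P Q R S = blk (c • P) (c • Q) (c • R) (c • S) :=
  ext_withLp_prod (fun x => by simp) (fun x => by simp)

lemma blk_sub (P Q R S P' Q' R' S' : K →L[ℂ] K) :
    blk P Q R S - blk P' Q' R' S' = blk (P - P') (Q - Q') (R - R') (S - S') :=
  ext_withLp_prod (fun x => by simp; abel) (fun x => by simp; abel)

lemma adjoint_blk [CompleteSpace K] (P Q R S : K →L[ℂ] K) :
    adjoint (blk P Q R S) = blk (adjoint P) (adjoint R) (adjoint Q) (adjoint S) := by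
  refine ((eq_adjoint_iff _ _).mpr fun x y => ?_).symm
  simp [WithLp.prod_inner_apply, adjoint_inner_left, inner_add_left, inner_add_right]
  ring

lemma isUnit_blk_diag_iff {P Q : K →L[ℂ] K} :
    IsUnit (blk P 0 0 Q) ↔ IsUnit P ∧ IsUnit Q := by
  simp only [isUnit_iff_exists]
  constructor
  · rintro ⟨W, hright, hleft⟩
    obtain ⟨P', Q', R', S', rfl⟩ := exists_eq_blk W
    rw [blk_mul, ← blk_one, blk_eq_blk_iff] at hright hleft
    simp only [zero_mul, mul_zero, add_zero, zero_add] at hright hleft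
    exact ⟨⟨P', hright.1, hleft.1⟩, ⟨S', hright.2.2.2, hleft.2.2.2⟩⟩
  · rintro ⟨⟨P', hP, hP'⟩, ⟨Q', hQ, hQ'⟩⟩
    refine ⟨blk P' 0 0 Q', ?_, ?_⟩ <;> simp [blk_mul, hP, hP', hQ, hQ', blk_one]

lemma inverse_blk_diag {P Q : K →L[ℂ] K} (hP : IsUnit P) (hQ : IsUnit Q) :
    (blk P 0 0 Q)⁻¹ʳ = blk P⁻¹ʳ 0 0 Q⁻¹ʳ :=
  Ring.inverse_unit ⟨blk P 0 0 Q, blk P⁻¹ʳ 0 0 Q⁻¹ʳ,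
    by simp [blk_mul, Ring.mul_inverse_cancel _ hP, Ring.mul_inverse_cancel _ hQ, blk_one],
    by simp [blk_mul, Ring.inverse_mul_cancel _ hP, Ring.inverse_mul_cancel _ hQ, blk_one]⟩

lemma inverse_blk_diag_mul_blk_antidiag_mul_blk_diag {P Q : K →L[ℂ] K} (hP : IsUnit P)
    (hQ : IsUnit Q) (X Y : K →L[ℂ] K) :
    (blk P 0 0 Q)⁻¹ʳ * blk 0 X Y 0 * blk P 0 0 Q = blk 0 (P⁻¹ʳ * X * Q) (Q⁻¹ʳ * Y * P) 0 := by
  simp [inverse_blk_diag hP hQ, blk_mul, mul_assoc]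

lemma spectrum_blk_diag (P Q : K →L[ℂ] K) :
    spectrum ℂ (blk P 0 0 Q) = spectrum ℂ P ∪ spectrum ℂ Q := by
  ext z
  have halg : algebraMap ℂ (WithLp 2 (K × K) →L[ℂ] WithLp 2 (K × K)) z
      = blk (algebraMap ℂ _ z) 0 0 (algebraMap ℂ _ z) := by
    simp only [Algebra.algebraMap_eq_smul_one, ← blk_one, blk_smul, smul_zero]
  simp only [spectrum.mem_iff, Set.mem_union, halg, blk_sub, sub_zero, isUnit_blk_diag_iff]
  tauto

lemma inv_sqrt_two_mul_self : ((√2 : ℝ) : ℂ)⁻¹ * ((√2 : ℝ) : ℂ)⁻¹ = 2⁻¹ := by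
  rw [← mul_inv, ← ofReal_mul, Real.mul_self_sqrt zero_le_two, ofReal_ofNat]

lemma adjoint_Tblk [CompleteSpace K] :
    adjoint (Tblk (H := K)) = ((√2 : ℝ) : ℂ)⁻¹ • blk 1 1 (-(I • 1)) (I • 1) := by
  rw [Tblk, ← star_eq_adjoint, star_smul, star_eq_adjoint, adjoint_blk]
  simp [← star_eq_adjoint, star_smul]

lemma Tblk_mem_unitary [CompleteSpace K] :
    Tblk (H := K) ∈ unitary (WithLp 2 (K × K) →L[ℂ] WithLp 2 (K × K)) := by
  rw [Unitary.mem_iff, star_eq_adjoint, adjoint_Tblk, Tblk]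
  simp only [smul_mul_smul_comm, inv_sqrt_two_mul_self, blk_mul, blk_smul, ← blk_one,
    blk_eq_blk_iff]
  refine ⟨⟨?_, ?_, ?_, ?_⟩, ⟨?_, ?_, ?_, ?_⟩⟩ <;>
  · simp only [mul_one, mul_smul_comm, smul_smul, mul_neg, I_mul_I, smul_neg, neg_neg]
    match_scalars
    grind [I_sq]

lemma adjoint_Tblk_mul_MBdG_mul_Tblk [CompleteSpace K] (D V : K →L[ℂ] K) :
    adjoint Tblk * MBdG D V * Tblk = blk 0 (I • D) (-I • (D + (2 : ℝ) • V)) 0 := by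
  rw [adjoint_Tblk, Tblk, MBdG]
  simp only [smul_mul_assoc, mul_smul_comm, smul_smul, inv_sqrt_two_mul_self, blk_mul]
  rw [blk_smul, blk_eq_blk_iff]
  refine ⟨?_, ?_, ?_, ?_⟩ <;>
  · simp only [one_mul, mul_one, smul_mul_assoc, mul_smul_comm, smul_smul, mul_neg, neg_mul,
      I_mul_I, smul_neg, mul_add, smul_add]
    match_scalars <;> grind [I_sq]

lemma Tblk_mul_blk_antidiag_mul_adjoint_Tblk [CompleteSpace K] (E : K →L[ℂ] K) :
    Tblk * blk 0 (I • E) (-I • E) 0 * adjoint Tblk = blk E 0 0 (-E) := by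
  rw [adjoint_Tblk, Tblk]
  simp only [smul_mul_assoc, mul_smul_comm, smul_smul, inv_sqrt_two_mul_self, blk_mul]
  rw [blk_smul, blk_eq_blk_iff]
  refine ⟨?_, ?_, ?_, ?_⟩ <;>
  · simp only [one_mul, mul_one, mul_zero, smul_mul_assoc, mul_smul_comm, smul_smul, mul_neg,
      neg_mul, I_mul_I, smul_neg, neg_neg, smul_add]
    match_scalars
    grind [I_sq]

end BlockOperators

section Bogoliubov

variable {D V : H →L[ℂ] H}

lemma isStrictlyPositive_sqrt_mul_mul_sqrt (hD : IsStrictlyPositive D) (hV : 0 ≤ V) :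
    IsStrictlyPositive (CFC.sqrt D * (D + (2 : ℝ) • V) * CFC.sqrt D) :=
  IsStrictlyPositive.conjugate_of_isUnit_of_isSelfAdjoint _ _
    (IsStrictlyPositive.sqrt D hD).isUnit (CFC.sqrt_nonneg D).isSelfAdjoint
    (hD.add_nonneg (smul_nonneg zero_le_two hV))

lemma bogE_mul_self (hD : IsStrictlyPositive D) (hV : 0 ≤ V) :
    bogE D V * bogE D V = CFC.sqrt D * (D + (2 : ℝ) • V) * CFC.sqrt D :=
  CFC.sqrt_mul_sqrt_self _ (isStrictlyPositive_sqrt_mul_mul_sqrt hD hV).nonneg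

lemma isStrictlyPositive_bogE (hD : IsStrictlyPositive D) (hV : 0 ≤ V) :
    IsStrictlyPositive (bogE D V) :=
  IsStrictlyPositive.sqrt _ (isStrictlyPositive_sqrt_mul_mul_sqrt hD hV)

lemma exists_units_bogA_bogB (hD : IsStrictlyPositive D) (hV : 0 ≤ V) :
    ∃ d s : (H →L[ℂ] H)ˣ, ↑d = CFC.sqrt D ∧ ↑s = CFC.sqrt (bogE D V) ∧
      bogA D V = ↑(d * s⁻¹) ∧ bogB D V = ↑(d⁻¹ * s) := by
  obtain ⟨d, hd⟩ := (IsStrictlyPositive.sqrt D hD).isUnit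
  obtain ⟨s, hs⟩ := (IsStrictlyPositive.sqrt _ (isStrictlyPositive_bogE hD hV)).isUnit
  refine ⟨d, s, hd, hs, ?_, ?_⟩
  · rw [bogA, ← hd, ← hs, Ring.inverse_unit, Units.val_mul]
  · rw [bogB, ← hd, ← hs, Ring.inverse_unit, Units.val_mul]

lemma isUnit_bogA (hD : IsStrictlyPositive D) (hV : 0 ≤ V) : IsUnit (bogA D V) := by
  obtain ⟨d, s, -, -, hA, -⟩ := exists_units_bogA_bogB hD hV
  exact hA ▸ Units.isUnit _

lemma isUnit_bogB (hD : IsStrictlyPositive D) (hV : 0 ≤ V) : IsUnit (bogB D V) := by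
  obtain ⟨d, s, -, -, -, hB⟩ := exists_units_bogA_bogB hD hV
  exact hB ▸ Units.isUnit _

lemma inverse_bogA_mul_mul_bogB (hD : IsStrictlyPositive D) (hV : 0 ≤ V) :
    (bogA D V)⁻¹ʳ * D * bogB D V = bogE D V := by
  obtain ⟨d, s, hd, hs, hA, hB⟩ := exists_units_bogA_bogB hD hV
  rw [hA, hB, Ring.inverse_unit, ← CFC.sqrt_mul_sqrt_self (bogE D V)
    (isStrictlyPositive_bogE hD hV).nonneg, ← hs, ← CFC.sqrt_mul_sqrt_self D hD.nonneg, ← hd]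
  simp [mul_assoc]

lemma inverse_bogB_mul_mul_bogA (hD : IsStrictlyPositive D) (hV : 0 ≤ V) :
    (bogB D V)⁻¹ʳ * (D + (2 : ℝ) • V) * bogA D V = bogE D V := by
  obtain ⟨d, s, hd, hs, hA, hB⟩ := exists_units_bogA_bogB hD hV
  have hEE := bogE_mul_self hD hV
  rw [← CFC.sqrt_mul_sqrt_self (bogE D V) (isStrictlyPositive_bogE hD hV).nonneg, ← hs,
    ← hd] at hEE
  rw [hA, hB, Ring.inverse_unit, ← CFC.sqrt_mul_sqrt_self (bogE D V)
    (isStrictlyPositive_bogE hD hV).nonneg, ← hs]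
  calc ↑(d⁻¹ * s)⁻¹ * (D + (2 : ℝ) • V) * ↑(d * s⁻¹)
      = ↑s⁻¹ * (↑d * (D + (2 : ℝ) • V) * ↑d) * ↑s⁻¹ := by simp [mul_assoc]
    _ = ↑s * ↑s := by rw [← hEE]; simp [mul_assoc]

lemma inverse_Sblk_mul_blk_mul_Sblk (hD : IsStrictlyPositive D) (hV : 0 ≤ V) :
    (Sblk D V)⁻¹ʳ * blk 0 (I • D) (-I • (D + (2 : ℝ) • V)) 0 * Sblk D V =
      blk 0 (I • bogE D V) (-I • bogE D V) 0 := by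
  rw [Sblk, inverse_blk_diag_mul_blk_antidiag_mul_blk_diag (isUnit_bogA hD hV)
    (isUnit_bogB hD hV)]
  simp only [mul_smul_comm, smul_mul_assoc, inverse_bogA_mul_mul_bogB hD hV,
    inverse_bogB_mul_mul_bogA hD hV]

end Bogoliubov

theorem BdG_diagonalization_general
    (δ : ℝ) (hδ : 0 < δ) (D V : H →L[ℂ] H)
    (hDδ : δ • (1 : H →L[ℂ] H) ≤ D)
    (hV : 0 ≤ V) :
    IsUnit (Gop D V) ∧
    Gop D V * MBdG D V * Ring.inverse (Gop D V) = blk (bogE D V) 0 0 (-(bogE D V)) ∧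
    spectrum ℂ (MBdG D V)
      = spectrum ℂ (bogE D V) ∪ (fun z => -z) '' spectrum ℂ (bogE D V) := by
  have hD : IsStrictlyPositive D := (isStrictlyPositive_one.smul hδ).of_le hDδ
  obtain ⟨s, hs⟩ : IsUnit (Sblk D V) :=
    isUnit_blk_diag_iff.mpr ⟨isUnit_bogA hD hV, isUnit_bogB hD hV⟩
  let t : (WithLp 2 (H × H) →L[ℂ] WithLp 2 (H × H))ˣ :=
    ⟨Tblk, adjoint Tblk, Tblk_mem_unitary.2, Tblk_mem_unitary.1⟩
  let g := t * s⁻¹ * t⁻¹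
  have hG : Gop D V = g := by simp [Gop, g, t, ← hs]
  have hconj : ↑g * MBdG D V * ↑g⁻¹ = blk (bogE D V) 0 0 (-(bogE D V)) :=
    calc ↑g * MBdG D V * ↑g⁻¹
        = Tblk * ((Sblk D V)⁻¹ʳ * (adjoint Tblk * MBdG D V * Tblk) * Sblk D V) *
            adjoint Tblk := by
          simp [g, t, ← hs, mul_assoc]
      _ = blk (bogE D V) 0 0 (-(bogE D V)) := by
          rw [adjoint_Tblk_mul_MBdG_mul_Tblk, inverse_Sblk_mul_blk_mul_Sblk hD hV,
            Tblk_mul_blk_antidiag_mul_adjoint_Tblk]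
  refine ⟨hG ▸ g.isUnit, by rwa [hG, Ring.inverse_unit], ?_⟩
  rw [← spectrum.units_conjugate (u := g), hconj, spectrum_blk_diag, ← spectrum.neg_eq,
    Set.image_neg_eq_neg]

theorem BdG_diagonalization
    (δ : ℝ) (hδ : 0 < δ) (D V : H →L[ℂ] H)
    (hD : IsSelfAdjoint D) (hDδ : δ • (1 : H →L[ℂ] H) ≤ D)
    (hV : 0 ≤ V) (hVtc : IsTraceClass V) :
    IsUnit (Gop D V) ∧
    Gop D V * MBdG D V * Ring.inverse (Gop D V) = blk (bogE D V) 0 0 (-(bogE D V)) ∧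
    spectrum ℂ (MBdG D V)
      = spectrum ℂ (bogE D V) ∪ (fun z => -z) '' spectrum ℂ (bogE D V) :=
  BdG_diagonalization_general δ hδ D V hDδ hV
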